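/- Let A(n,k) be the number of partitions with perimeter n having exactly k repeated parts. Then for all n ≥ 3 and k ≥ 1, A(n,k) = A(n−1,k) + A(n−1,k−1) + A(n−2,k) − A(n−2,k−1). -/

import Mathlib

/-!
Split the partitions of perimeter `n` according to whether `1` is a part. Those without a
part `1` are obtained bijectively from the partitions of perimeter `n - 1` by adding `1` to
every part, which keeps the repetitions. Those with a part `1` (other than `[1]`) are obtained
bijectively by appending a `1` to a partition of perimeter `n - 1`, which creates a new
repetition exactly when that partition already had a part `1`. Writing `B(n, k)` for the
number with a part `1`, this gives `A(n, k) = B(n, k) + A(n - 1, k)` and, for `k ≥ 1`,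
`B(n, k) = B(n - 1, k - 1) + A(n - 2, k)`; eliminating `B` yields the recurrence.
-/

/-- A partition: a nonempty weakly decreasing list of positive integers. -/
def IsPartition (l : List ℕ) : Prop :=
  l ≠ [] ∧ l.Pairwise (· ≥ ·) ∧ ∀ x ∈ l, 0 < x

/-- The perimeter of a partition: largest part plus number of parts minus 1. -/
def perim (l : List ℕ) : ℕ := l.headI + l.length - 1

/-- Number of repeated parts: indices i with λ_i = λ_{i+1}. -/
def repStat (l : List ℕ) : ℕ :=
  ((List.range (l.length - 1)).filter fun i => l.getD i 0 = l.getD (i + 1) 0).length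

/-- Number of even parts. -/
def evenStat (l : List ℕ) : ℕ := l.countP fun x => x % 2 = 0
/-- A(n,k): number of partitions with perimeter n and exactly k repeated parts. -/
noncomputable def A (n k : ℕ) : ℕ :=
  {l : List ℕ | IsPartition l ∧ perim l = n ∧ repStat l = k}.ncard

@[simp] lemma repStat_nil : repStat [] = 0 := rfl

@[simp] lemma repStat_singleton (a : ℕ) : repStat [a] = 0 := rfl

lemma repStat_cons_cons (a b : ℕ) (t : List ℕ) :
    repStat (a :: b :: t) = repStat (b :: t) + if a = b then 1 else 0 := by
  simp only [repStat, List.length_cons, Nat.add_sub_cancel, List.range_succ_eq_map,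
    List.filter_cons, List.filter_map, List.getD_cons_succ, List.getD_cons_zero]
  split_ifs <;> simp_all [Function.comp_def]

lemma repStat_map_of_injective {f : ℕ → ℕ} (hf : f.Injective) (l : List ℕ) :
    repStat (l.map f) = repStat l := by
  induction l with
  | nil => rfl
  | cons a t ih =>
    cases t with
    | nil => rfl
    | cons b s =>
      rw [List.map_cons, List.map_cons, repStat_cons_cons, ← List.map_cons, ih,
        repStat_cons_cons]
      simp only [hf.eq_iff]

lemma repStat_append_singleton (l : List ℕ) (x : ℕ) :
    repStat (l ++ [x]) = repStat l + if l.getLast? = some x then 1 else 0 := by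
  induction l with
  | nil => simp
  | cons a t ih =>
    cases t with
    | nil => simp [repStat_cons_cons]
    | cons b s =>
      rw [List.cons_append, List.cons_append, repStat_cons_cons, ← List.cons_append, ih,
        repStat_cons_cons, List.getLast?_cons_cons]
      omega

lemma perim_cons (a : ℕ) (t : List ℕ) : perim (a :: t) = a + t.length := by
  simp [perim]

lemma perim_append_singleton {l : List ℕ} (hl : l ≠ []) (x : ℕ) :
    perim (l ++ [x]) = perim l + 1 := by
  obtain ⟨a, t, rfl⟩ := List.exists_cons_of_ne_nil hl
  simp only [List.cons_append, perim_cons, List.length_append, List.length_cons,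
    List.length_nil]
  omega

lemma perim_map_succ {l : List ℕ} (hl : l ≠ []) : perim (l.map (· + 1)) = perim l + 1 := by
  obtain ⟨a, t, rfl⟩ := List.exists_cons_of_ne_nil hl
  simp only [List.map_cons, perim_cons, List.length_map]
  omega

namespace IsPartition

variable {l : List ℕ}

lemma le_perim (h : IsPartition l) {x : ℕ} (hx : x ∈ l) : x ≤ perim l := by
  obtain ⟨a, t, rfl⟩ := List.exists_cons_of_ne_nil h.1
  rw [perim_cons]
  rcases List.mem_cons.1 hx with rfl | hx
  · omega
  · have := List.rel_of_pairwise_cons h.2.1 hx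
    omega

lemma length_le_perim (h : IsPartition l) : l.length ≤ perim l := by
  obtain ⟨a, t, rfl⟩ := List.exists_cons_of_ne_nil h.1
  have := h.2.2 a List.mem_cons_self
  simp only [perim_cons, List.length_cons]
  omega

lemma map_succ (h : IsPartition l) : IsPartition (l.map (· + 1)) :=
  ⟨by simpa using h.1, h.2.1.map _ fun _ _ hab => by omega, by simp⟩

lemma exists_map_succ_eq (h : IsPartition l) (h1 : 1 ∉ l) :
    ∃ l', IsPartition l' ∧ l'.map (· + 1) = l := by
  have two_le : ∀ x ∈ l, 2 ≤ x := fun x hx => by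
    have := h.2.2 x hx
    have : x ≠ 1 := by rintro rfl; exact h1 hx
    omega
  refine ⟨l.map (· - 1), ⟨by simpa using h.1, h.2.1.map _ fun _ _ hab => by omega, ?_⟩, ?_⟩
  · simp only [List.mem_map, forall_exists_index, and_imp, forall_apply_eq_imp_iff₂]
    exact fun x hx => Nat.sub_pos_of_lt (two_le x hx)
  · rw [List.map_map]
    exact (List.map_congr_left fun x hx => Nat.sub_add_cancel (h.2.2 x hx)).trans l.map_id

lemma append_one (h : IsPartition l) : IsPartition (l ++ [1]) := by
  refine ⟨by simp, List.pairwise_append.2 ⟨h.2.1, by simp, ?_⟩, ?_⟩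
  · simpa [Nat.one_le_iff_ne_zero, Nat.pos_iff_ne_zero] using h.2.2
  · simp only [List.mem_append, List.mem_singleton]
    rintro x (hx | rfl)
    exacts [h.2.2 x hx, Nat.one_pos]

lemma of_append_left {l' : List ℕ} (h : IsPartition (l ++ l')) (hl : l ≠ []) :
    IsPartition l :=
  ⟨hl, (List.pairwise_append.1 h.2.1).1, fun x hx => h.2.2 x (List.mem_append_left _ hx)⟩

lemma getLast?_eq_some_one_iff (h : IsPartition l) : l.getLast? = some 1 ↔ 1 ∈ l := by
  refine ⟨List.mem_of_getLast?, fun h1 => ?_⟩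
  obtain ⟨t, z, rfl⟩ := (List.eq_nil_or_concat' l).resolve_left h.1
  have hz := h.2.2 z (by simp)
  have hle := (List.pairwise_append.1 h.2.1).2.2
  simp only [List.mem_append, List.mem_singleton] at h1 hle
  rcases h1 with h1 | rfl
  · have := hle 1 h1 z rfl
    simp only [List.getLast?_append, List.getLast?_singleton, Option.some_or, Option.some.injEq]
    omega
  · simp

lemma repStat_append_one (h : IsPartition l) :
    repStat (l ++ [1]) = repStat l + if 1 ∈ l then 1 else 0 := by
  simp only [repStat_append_singleton, h.getLast?_eq_some_one_iff]

end IsPartition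

def perimRepSet (n k : ℕ) : Set (List ℕ) :=
  {l | IsPartition l ∧ perim l = n ∧ repStat l = k}

lemma A_eq_ncard (n k : ℕ) : A n k = (perimRepSet n k).ncard := rfl

lemma perimRepSet_finite (n k : ℕ) : (perimRepSet n k).Finite := by
  refine ((List.finite_length_le (Fin (n + 1)) n).image (List.map Fin.val)).subset ?_
  rintro l ⟨hl, rfl, -⟩
  refine ⟨l.map (Fin.ofNat (perim l + 1)), by simpa using hl.length_le_perim, ?_⟩
  rw [List.map_map]
  refine (List.map_congr_left fun x hx => ?_).trans (List.map_id l)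
  simpa using Nat.mod_eq_of_lt (Nat.lt_succ_of_le (hl.le_perim hx))

lemma image_map_succ_perimRepSet (n k : ℕ) :
    List.map (· + 1) '' perimRepSet n k = perimRepSet (n + 1) k \ {l | 1 ∈ l} := by
  ext l
  constructor
  · rintro ⟨l, ⟨hl, rfl, rfl⟩, rfl⟩
    exact ⟨⟨hl.map_succ, perim_map_succ hl.1,
      repStat_map_of_injective (add_left_injective 1) l⟩,
      by simpa using fun h0 => lt_irrefl 0 (hl.2.2 0 h0)⟩
  · rintro ⟨⟨hl, hp, rfl⟩, h1⟩
    obtain ⟨l', hl', rfl⟩ := hl.exists_map_succ_eq h1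
    rw [perim_map_succ hl'.1] at hp
    exact ⟨l', ⟨hl', by omega, (repStat_map_of_injective (add_left_injective 1) l').symm⟩,
      rfl⟩

lemma image_append_one_perimRepSet (n k : ℕ) :
    (· ++ [1]) '' (perimRepSet n k ∩ {l | 1 ∈ l} ∪ perimRepSet n (k + 1) \ {l | 1 ∈ l}) =
      perimRepSet (n + 1) (k + 1) ∩ {l | 1 ∈ l} := by
  ext l
  constructor
  · rintro ⟨l, hl, rfl⟩
    rcases hl with ⟨⟨hl, rfl, hr⟩, h1⟩ | ⟨⟨hl, rfl, hr⟩, h1⟩ <;>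
    · refine ⟨⟨hl.append_one, perim_append_singleton hl.1 1, ?_⟩, by simp⟩
      simp_all [hl.repStat_append_one]
  · rintro ⟨⟨hl, hp, hr⟩, h1⟩
    obtain ⟨l', rfl⟩ := List.getLast?_eq_some_iff.1 (hl.getLast?_eq_some_one_iff.2 h1)
    have hl' : l' ≠ [] := by rintro rfl; simp at hr
    have hpart := hl.of_append_left hl'
    rw [perim_append_singleton hl' 1] at hp
    rw [hpart.repStat_append_one] at hr
    refine ⟨l', ?_, rfl⟩
    by_cases h1' : 1 ∈ l'
    · exact Or.inl ⟨⟨hpart, by omega, by simpa [h1'] using hr⟩, h1'⟩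
    · exact Or.inr ⟨⟨hpart, by omega, by simpa [h1'] using hr⟩, h1'⟩

lemma A_succ (n k : ℕ) :
    A (n + 1) k = (perimRepSet (n + 1) k ∩ {l | 1 ∈ l}).ncard + A n k := by
  rw [A_eq_ncard, A_eq_ncard, ← Set.ncard_inter_add_ncard_sdiff_eq_ncard _ {l | 1 ∈ l}
    (perimRepSet_finite _ _), ← image_map_succ_perimRepSet,
    Set.ncard_image_of_injective _ (List.map_injective_iff.2 (add_left_injective 1))]

lemma ncard_perimRepSet_inter_one (n k : ℕ) :
    (perimRepSet (n + 1 + 1) (k + 1) ∩ {l | 1 ∈ l}).ncard =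
      (perimRepSet (n + 1) k ∩ {l | 1 ∈ l}).ncard + A n (k + 1) := by
  rw [← image_append_one_perimRepSet,
    Set.ncard_image_of_injective _ (List.append_left_injective _),
    Set.ncard_union_eq (Set.disjoint_sdiff_right.mono_left Set.inter_subset_right)
      ((perimRepSet_finite _ _).inter_of_left _) (perimRepSet_finite _ _).sdiff,
    ← image_map_succ_perimRepSet,
    Set.ncard_image_of_injective _ (List.map_injective_iff.2 (add_left_injective 1)), A_eq_ncard]

theorem A_recurrence (n k : ℕ) (hn : 3 ≤ n) (hk : 1 ≤ k) :
    (A n k : ℤ) =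
      A (n - 1) k + A (n - 1) (k - 1) + A (n - 2) k - A (n - 2) (k - 1) := by
  obtain ⟨m, rfl⟩ : ∃ m, n = m + 1 + 1 := ⟨n - 2, by omega⟩
  obtain ⟨j, rfl⟩ : ∃ j, k = j + 1 := ⟨k - 1, by omega⟩
  show (A (m + 1 + 1) (j + 1) : ℤ) = A (m + 1) (j + 1) + A (m + 1) j + A m (j + 1) - A m j
  have h₁ := A_succ (m + 1) (j + 1)
  have h₂ := A_succ m j
  have h₃ := ncard_perimRepSet_inter_one m j
  omega
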